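/- Let g₁, g₂ : ℝ → ℝ be g₁(x) = x² and g₂(x) = x³, let S = {g₁, g₂}, and let G be the semigroup generated by S under composition, with G* = G \ S. Then the point p = −1 is a nonwandering point for G but is not a strongly nonwandering point for G. -/

import Mathlib

/-- `x` is a nonwandering point for a semigroup `G` generated by the family `S`
(`G* = G \ S`): every neighborhood `U` of `x` satisfies `g(U) ∩ U ≠ ∅` for some `g ∈ G*`. -/
def Nonwandering {X : Type*} [TopologicalSpace X] (G S : Set (X → X)) (x : X) : Prop :=
  ∀ U ∈ nhds x, ∃ g ∈ G \ S, ((g '' U) ∩ U).Nonempty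

/-- `x` is a strongly nonwandering point for a semigroup `G`: for every neighborhood `U` of
`x` and every `g ∈ G` there is `h ∈ Ĝ = G ∪ {identity}` with `(h ∘ g)(U) ∩ U ≠ ∅`. -/
def StronglyNonwandering {X : Type*} [TopologicalSpace X] (G : Set (X → X)) (x : X) : Prop :=
  ∀ U ∈ nhds x, ∀ g ∈ G, ∃ h ∈ G ∪ {(id : X → X)}, (((h ∘ g) '' U) ∩ U).Nonempty

/-- `g₁(x) = x²`. -/
noncomputable def g1 : ℝ → ℝ := fun x => x ^ 2

/-- `g₂(x) = x³`. -/
noncomputable def g2 : ℝ → ℝ := fun x => x ^ 3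

/-- The generating family `S = {g₁, g₂}`. -/
noncomputable def Sfam : Set (ℝ → ℝ) := {g1, g2}

/-- The semigroup generated by `S = {g₁, g₂}`: all finite (nonempty) compositions. -/
noncomputable def Gsemi : Set (ℝ → ℝ) :=
  {f | ∃ l : List (ℝ → ℝ), l ≠ [] ∧ (∀ u ∈ l, u ∈ Sfam) ∧ f = l.foldr (· ∘ ·) id}

lemma pos_of_foldr (l : List (ℝ → ℝ)) (hl : ∀ u ∈ l, u ∈ Sfam) :
    ∀ x : ℝ, 0 < x → 0 < l.foldr (· ∘ ·) id x := by
  induction l with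
  | nil => intro x hx; simpa using hx
  | cons u t ih =>
    intro x hx
    have hix : 0 < t.foldr (· ∘ ·) id x := ih (fun v hv => hl v (List.mem_cons_of_mem _ hv)) x hx
    have hu : u ∈ Sfam := hl u List.mem_cons_self
    simp only [List.foldr_cons, Function.comp_apply]
    rcases hu with hu | hu <;> subst hu
    · exact pow_pos hix 2
    · exact pow_pos hix 3

/-- For `g₁(x) = x²`, `g₂(x) = x³`, `S = {g₁, g₂}` and `G = ⟨S⟩` with `G* = G \ S`, the point
`p = -1` is a nonwandering point for `G` but not a strongly nonwandering point for `G`. -/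
theorem neg_one_nonwandering_not_stronglyNonwandering :
    Nonwandering Gsemi Sfam (-1 : ℝ) ∧ ¬ StronglyNonwandering Gsemi (-1 : ℝ) := by
  constructor
  · intro U hU
    refine ⟨g2 ∘ g2, ⟨⟨[g2, g2], by simp, ?_, by funext x; simp⟩, ?_⟩, ?_⟩
    · intro u hu; simp only [List.mem_cons, List.not_mem_nil, or_false] at hu
      rcases hu with h | h <;> (subst h; exact Or.inr rfl)
    · intro h
      have h2 : (g2 ∘ g2) 2 = g1 2 ∨ (g2 ∘ g2) 2 = g2 2 := by
        rcases h with h | h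
        · exact Or.inl (congrFun h 2)
        · exact Or.inr (congrFun h 2)
      norm_num [g1, g2] at h2
    · refine ⟨-1, ⟨-1, mem_of_mem_nhds hU, ?_⟩, mem_of_mem_nhds hU⟩
      simp [g2]; norm_num
  · intro hS
    have hU : Set.Ioo (-2 : ℝ) 0 ∈ nhds (-1 : ℝ) :=
      Ioo_mem_nhds (by norm_num) (by norm_num)
    have hg1 : g1 ∈ Gsemi := ⟨[g1], by simp, by (intro u hu; simp at hu; subst hu; exact Or.inl rfl), by funext x; simp⟩
    obtain ⟨h, hh, x, ⟨y, hy, hyx⟩, hxU⟩ := hS _ hU g1 hg1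
    have hy2 : 0 < g1 y := pow_two_pos_of_ne_zero (ne_of_lt hy.2)
    have hpos : 0 < h (g1 y) := by
      rcases hh with ⟨l, _, hl, rfl⟩ | hh
      · exact pos_of_foldr l hl _ hy2
      · simp only [Set.mem_singleton_iff] at hh; subst hh; simpa using hy2
    rw [Function.comp_apply] at hyx
    rw [hyx] at hpos
    exact absurd hxU.2 (not_lt.mpr hpos.le)
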